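/- For any real constants A, B with A² + B² = 1 and any smooth function g : ℝ → ℝ, the function u(x,y) = −ABx² + (A² − B²)xy + ABy² + g(−Bx + Ay) satisfies the p-minimal graph equation (u_y + x)² u_xx − 2(u_y + x)(u_x − y) u_xy + (u_x − y)² u_yy = 0 on ℝ². -/

import Mathlib

noncomputable def ux (u : ℝ → ℝ → ℝ) (x y : ℝ) : ℝ := deriv (fun t => u t y) x
noncomputable def uy (u : ℝ → ℝ → ℝ) (x y : ℝ) : ℝ := deriv (fun t => u x t) y
noncomputable def uxx (u : ℝ → ℝ → ℝ) (x y : ℝ) : ℝ := deriv (fun t => ux u t y) x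
noncomputable def uxy (u : ℝ → ℝ → ℝ) (x y : ℝ) : ℝ := deriv (fun t => ux u x t) y
noncomputable def uyy (u : ℝ → ℝ → ℝ) (x y : ℝ) : ℝ := deriv (fun t => uy u x t) y

theorem second_family_is_p_minimal (A B : ℝ) (hAB : A ^ 2 + B ^ 2 = 1)
    (g : ℝ → ℝ) (hg : ContDiff ℝ (⊤ : ℕ∞) g) :
    ∀ x y : ℝ,
      let u : ℝ → ℝ → ℝ := fun x y =>
        -A * B * x ^ 2 + (A ^ 2 - B ^ 2) * x * y + A * B * y ^ 2 + g (-B * x + A * y)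
      (uy u x y + x) ^ 2 * uxx u x y
        - 2 * (uy u x y + x) * (ux u x y - y) * uxy u x y
        + (ux u x y - y) ^ 2 * uyy u x y = 0 := by
  intro x y
  set u : ℝ → ℝ → ℝ := fun x y =>
    -A * B * x ^ 2 + (A ^ 2 - B ^ 2) * x * y + A * B * y ^ 2 + g (-B * x + A * y) with hu
  have hgd : Differentiable ℝ g := hg.differentiable (by simp)
  have hg'd : Differentiable ℝ (deriv g) := ((contDiff_infty_iff_deriv.mp (hg.of_le (by simp))).2).differentiable (by simp)
  -- first derivatives
  have hxderiv : ∀ a b : ℝ, HasDerivAt (fun t => u t b)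
      (-2 * A * B * a + (A ^ 2 - B ^ 2) * b - B * deriv g (-B * a + A * b)) a := by
    intro a b
    have hinner : HasDerivAt (fun t : ℝ => -B * t + A * b) (-B) a := by
      simpa using ((hasDerivAt_id a).const_mul (-B)).add_const (A * b)
    have hgc : HasDerivAt (fun t : ℝ => g (-B * t + A * b))
        (deriv g (-B * a + A * b) * (-B)) a :=
      (hgd (-B * a + A * b)).hasDerivAt.comp a hinner
    have hpoly : HasDerivAt (fun t : ℝ =>
        -A * B * t ^ 2 + (A ^ 2 - B ^ 2) * t * b + A * B * b ^ 2)
        (-A * B * (2 * a) + (A ^ 2 - B ^ 2) * b) a := by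
      have h1 : HasDerivAt (fun t : ℝ => -A * B * t ^ 2) (-A * B * (2 * a)) a := by
        simpa using (hasDerivAt_pow 2 a).const_mul (-A * B)
      have h2 : HasDerivAt (fun t : ℝ => (A ^ 2 - B ^ 2) * t * b) ((A ^ 2 - B ^ 2) * b) a := by
        simpa using ((hasDerivAt_id a).const_mul (A ^ 2 - B ^ 2)).mul_const b
      simpa using (h1.add h2).add_const (A * B * b ^ 2)
    have := hpoly.add hgc
    refine this.congr_deriv ?_
    ring
  have hyderiv : ∀ a b : ℝ, HasDerivAt (fun t => u a t)
      ((A ^ 2 - B ^ 2) * a + 2 * A * B * b + A * deriv g (-B * a + A * b)) b := by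
    intro a b
    have hinner : HasDerivAt (fun t : ℝ => -B * a + A * t) A b := by
      simpa using ((hasDerivAt_id b).const_mul A).const_add (-B * a)
    have hgc : HasDerivAt (fun t : ℝ => g (-B * a + A * t))
        (deriv g (-B * a + A * b) * A) b :=
      (hgd (-B * a + A * b)).hasDerivAt.comp b hinner
    have hpoly : HasDerivAt (fun t : ℝ =>
        -A * B * a ^ 2 + (A ^ 2 - B ^ 2) * a * t + A * B * t ^ 2)
        ((A ^ 2 - B ^ 2) * a + A * B * (2 * b)) b := by
      have h1 : HasDerivAt (fun t : ℝ => (A ^ 2 - B ^ 2) * a * t) ((A ^ 2 - B ^ 2) * a) b := by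
        simpa using (hasDerivAt_id b).const_mul ((A ^ 2 - B ^ 2) * a)
      have h2 : HasDerivAt (fun t : ℝ => A * B * t ^ 2) (A * B * (2 * b)) b := by
        simpa using (hasDerivAt_pow 2 b).const_mul (A * B)
      have := (h1.add h2).const_add (-A * B * a ^ 2)
      exact (this.congr_deriv (by ring)).congr_of_eventuallyEq (Filter.Eventually.of_forall fun t => by simp only [Pi.add_apply]; ring)
    have := hpoly.add hgc
    refine this.congr_deriv ?_
    ring
  have hux : ∀ a b : ℝ, ux u a b
      = -2 * A * B * a + (A ^ 2 - B ^ 2) * b - B * deriv g (-B * a + A * b) := fun a b =>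
    (hxderiv a b).deriv
  have huy : ∀ a b : ℝ, uy u a b
      = (A ^ 2 - B ^ 2) * a + 2 * A * B * b + A * deriv g (-B * a + A * b) := fun a b =>
    (hyderiv a b).deriv
  -- second derivatives
  have huxx : uxx u x y = -2 * A * B + B ^ 2 * deriv (deriv g) (-B * x + A * y) := by
    have hinner : HasDerivAt (fun t : ℝ => -B * t + A * y) (-B) x := by
      simpa using ((hasDerivAt_id x).const_mul (-B)).add_const (A * y)
    have hgc : HasDerivAt (fun t : ℝ => deriv g (-B * t + A * y))
        (deriv (deriv g) (-B * x + A * y) * (-B)) x :=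
      by have := (hg'd (-B * x + A * y)).hasDerivAt; exact this.comp x hinner
    have h1 : HasDerivAt (fun t : ℝ => -2 * A * B * t + (A ^ 2 - B ^ 2) * y) (-2 * A * B) x := by
      simpa using ((hasDerivAt_id x).const_mul (-2 * A * B)).add_const ((A ^ 2 - B ^ 2) * y)
    have h2 := h1.sub (hgc.const_mul B)
    have h3 : deriv (fun t => ux u t y) x
        = -2 * A * B - B * (deriv (deriv g) (-B * x + A * y) * (-B)) := by
      have : (fun t => ux u t y) = fun t =>
          (-2 * A * B * t + (A ^ 2 - B ^ 2) * y) - B * deriv g (-B * t + A * y) := by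
        funext t
        rw [hux t y]
      rw [this]
      exact h2.deriv
    rw [uxx, h3]; ring
  have huxy : uxy u x y = (A ^ 2 - B ^ 2) - A * B * deriv (deriv g) (-B * x + A * y) := by
    have hinner : HasDerivAt (fun t : ℝ => -B * x + A * t) A y := by
      simpa using ((hasDerivAt_id y).const_mul A).const_add (-B * x)
    have hgc : HasDerivAt (fun t : ℝ => deriv g (-B * x + A * t))
        (deriv (deriv g) (-B * x + A * y) * A) y :=
      by have := (hg'd (-B * x + A * y)).hasDerivAt; exact this.comp y hinner
    have h1 : HasDerivAt (fun t : ℝ => -2 * A * B * x + (A ^ 2 - B ^ 2) * t)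
        (A ^ 2 - B ^ 2) y := by
      simpa using ((hasDerivAt_id y).const_mul (A ^ 2 - B ^ 2)).const_add (-2 * A * B * x)
    have h2 := h1.sub (hgc.const_mul B)
    have h3 : deriv (fun t => ux u x t) y
        = (A ^ 2 - B ^ 2) - B * (deriv (deriv g) (-B * x + A * y) * A) := by
      have : (fun t => ux u x t) = fun t =>
          (-2 * A * B * x + (A ^ 2 - B ^ 2) * t) - B * deriv g (-B * x + A * t) := by
        funext t
        rw [hux x t]
      rw [this]
      exact h2.deriv
    rw [uxy, h3]; ring
  have huyy : uyy u x y = 2 * A * B + A ^ 2 * deriv (deriv g) (-B * x + A * y) := by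
    have hinner : HasDerivAt (fun t : ℝ => -B * x + A * t) A y := by
      simpa using ((hasDerivAt_id y).const_mul A).const_add (-B * x)
    have hgc : HasDerivAt (fun t : ℝ => deriv g (-B * x + A * t))
        (deriv (deriv g) (-B * x + A * y) * A) y :=
      by have := (hg'd (-B * x + A * y)).hasDerivAt; exact this.comp y hinner
    have h1 : HasDerivAt (fun t : ℝ => (A ^ 2 - B ^ 2) * x + 2 * A * B * t) (2 * A * B) y := by
      simpa using ((hasDerivAt_id y).const_mul (2 * A * B)).const_add ((A ^ 2 - B ^ 2) * x)
    have h2 := h1.add (hgc.const_mul A)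
    have h3 : deriv (fun t => uy u x t) y
        = 2 * A * B + A * (deriv (deriv g) (-B * x + A * y) * A) := by
      have : (fun t => uy u x t) = fun t =>
          ((A ^ 2 - B ^ 2) * x + 2 * A * B * t) + A * deriv g (-B * x + A * t) := by
        funext t
        rw [huy x t]
      rw [this]
      exact h2.deriv
    rw [uyy, h3]; ring
  -- factor the first-order terms
  have h1 : uy u x y + x = A * (2 * A * x + 2 * B * y + deriv g (-B * x + A * y)) := by
    rw [huy x y]; linear_combination (-x) * hAB
  have h2 : ux u x y - y = -B * (2 * A * x + 2 * B * y + deriv g (-B * x + A * y)) := by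
    rw [hux x y]; linear_combination y * hAB
  show (uy u x y + x) ^ 2 * uxx u x y - 2 * (uy u x y + x) * (ux u x y - y) * uxy u x y + (ux u x y - y) ^ 2 * uyy u x y = 0
  rw [h1, h2, huxx, huxy, huyy]
  ring
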